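/- Let x₀ ∈ ℝ³, let e ∈ S²₁, and let z* ∈ H² with B(z*, e) = 0 (z* lies on the geodesic line represented by e). If the function z ↦ B(z, x₀) restricted to the line {z ∈ H² : B(z, e) = 0} attains a local maximum or a local minimum at z*, then B(z*, x₀)² = B(e, x₀)² − B(x₀, x₀). (This is the computation underlying the fact that geodesic lines e₁, …, eₙ are tangent to a common equidistant curve of x₀ — a circle, horocycle, or equidistant line according to whether x₀ is timelike, lightlike, or spacelike — if and only if |B(e₁,x₀)| = ⋯ = |B(eₙ,x₀)|.) -/

import Mathlib

/-- The Lorentz bilinear form on ℝ³: B(x,y) = −x⁰y⁰ + x¹y¹ + x²y². -/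
noncomputable def lorentzB (x y : Fin 3 → ℝ) : ℝ :=
  -(x 0 * y 0) + x 1 * y 1 + x 2 * y 2

/-- The hyperboloid model H² = {x : B(x,x) = −1, x⁰ > 0}. -/
def hyperboloid : Set (Fin 3 → ℝ) :=
  {x | lorentzB x x = -1 ∧ 0 < x 0}

/-- The de Sitter sphere S²₁ = {x : B(x,x) = 1}. -/
def deSitter : Set (Fin 3 → ℝ) :=
  {x | lorentzB x x = 1}

/-! Along the line through `z*` with unit tangent `w = lorentzCross z* e`, i.e.
`t ↦ cosh t • z* + sinh t • w`, the derivative of `z ↦ B(z, x₀)` at `z*` is `B(w, x₀)`, which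
therefore vanishes at an extremum. But `B(w, x₀) = det[x₀, z*, e]`, whose square is minus the
Lorentz Gram determinant of `(x₀, z*, e)`; since `(z*, e)` is orthonormal this reads
`B(w, x₀)² = B(x₀, x₀) - B(e, x₀)² + B(z*, x₀)²`. -/

open Matrix Real Filter Topology

def lorentzMetric : Matrix (Fin 3) (Fin 3) ℝ := diagonal ![-1, 1, 1]

theorem lorentzB_comm (x y : Fin 3 → ℝ) : lorentzB x y = lorentzB y x := by
  simp only [lorentzB]; ring

theorem lorentzB_add_left (x y z : Fin 3 → ℝ) :
    lorentzB (x + y) z = lorentzB x z + lorentzB y z := by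
  simp only [lorentzB, Pi.add_apply]; ring

theorem lorentzB_smul_left (a : ℝ) (x y : Fin 3 → ℝ) :
    lorentzB (a • x) y = a * lorentzB x y := by
  simp only [lorentzB, Pi.smul_apply, smul_eq_mul]; ring

noncomputable def lorentzGram (M : Matrix (Fin 3) (Fin 3) ℝ) : Matrix (Fin 3) (Fin 3) ℝ :=
  Matrix.of fun i j => lorentzB (M i) (M j)

theorem lorentzGram_eq (M : Matrix (Fin 3) (Fin 3) ℝ) :
    lorentzGram M = M * lorentzMetric * Mᵀ := by
  ext i j
  simp [lorentzGram, lorentzB, lorentzMetric, mul_apply, Fin.sum_univ_three]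

theorem det_lorentzGram (M : Matrix (Fin 3) (Fin 3) ℝ) :
    (lorentzGram M).det = -M.det ^ 2 := by
  rw [lorentzGram_eq, det_mul, det_mul, det_transpose, lorentzMetric, det_diagonal,
    Fin.prod_univ_three]
  simp only [cons_val_zero, cons_val_one, cons_val]
  ring

def lorentzCross (u v : Fin 3 → ℝ) : Fin 3 → ℝ := lorentzMetric *ᵥ (u ⨯₃ v)

theorem lorentzB_lorentzCross (u v x : Fin 3 → ℝ) :
    lorentzB (lorentzCross u v) x = x ⬝ᵥ u ⨯₃ v := by
  simp only [lorentzB, lorentzCross, lorentzMetric, cross_apply, mulVec_diagonal, cons_val_zero,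
    cons_val_one, cons_val, dotProduct, Fin.sum_univ_three]
  ring

theorem lorentzB_lorentzCross_left (u v : Fin 3 → ℝ) :
    lorentzB (lorentzCross u v) u = 0 := by
  rw [lorentzB_lorentzCross, dot_self_cross]

theorem lorentzB_lorentzCross_right (u v : Fin 3 → ℝ) :
    lorentzB (lorentzCross u v) v = 0 := by
  rw [lorentzB_lorentzCross, dot_cross_self]

theorem lorentzB_lorentzCross_self (u v : Fin 3 → ℝ) :
    lorentzB (lorentzCross u v) (lorentzCross u v) =
      lorentzB u v ^ 2 - lorentzB u u * lorentzB v v := by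
  simp only [lorentzB, lorentzCross, lorentzMetric, cross_apply, mulVec_diagonal, cons_val_zero,
    cons_val_one, cons_val]
  ring

theorem lorentzB_lorentzCross_sq (u v x : Fin 3 → ℝ) :
    lorentzB (lorentzCross u v) x ^ 2 = -(lorentzGram ![x, u, v]).det := by
  rw [lorentzB_lorentzCross, triple_product_eq_det, det_lorentzGram (M := ![x, u, v]), neg_neg]

theorem lorentzB_lorentzCross_sq_of_orthonormal {u v : Fin 3 → ℝ} (hu : lorentzB u u = -1)
    (hv : lorentzB v v = 1) (huv : lorentzB u v = 0) (x : Fin 3 → ℝ) :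
    lorentzB (lorentzCross u v) x ^ 2 = lorentzB x x - lorentzB v x ^ 2 + lorentzB u x ^ 2 := by
  rw [lorentzB_lorentzCross_sq, det_fin_three]
  simp only [lorentzGram, of_apply, cons_val_zero, cons_val_one, cons_val, hu, hv, huv,
    lorentzB_comm v u, lorentzB_comm x u, lorentzB_comm x v]
  ring

def geodesicLine (e : Fin 3 → ℝ) : Set (Fin 3 → ℝ) :=
  {z | z ∈ hyperboloid ∧ lorentzB z e = 0}

theorem lorentzB_eq_zero_of_isLocalExtrOn {x e z w : Fin 3 → ℝ} (hz : z ∈ hyperboloid)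
    (hze : lorentzB z e = 0) (hwz : lorentzB w z = 0) (hwe : lorentzB w e = 0)
    (hww : lorentzB w w = 1) (hext : IsLocalExtrOn (fun y => lorentzB y x) (geodesicLine e) z) :
    lorentzB w x = 0 := by
  set γ : ℝ → Fin 3 → ℝ := fun t => cosh t • z + sinh t • w
  have hγ (t : ℝ) (y : Fin 3 → ℝ) :
      lorentzB (γ t) y = cosh t * lorentzB z y + sinh t * lorentzB w y := by
    simp only [γ, lorentzB_add_left, lorentzB_smul_left]
  have hγ0 : γ 0 = z := by simp [γ]
  have hcont : Continuous γ := by fun_prop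
  have hpos : ∀ᶠ t in 𝓝 0, 0 < γ t 0 :=
    continuousAt_const.eventually_lt ((continuous_apply 0).comp hcont).continuousAt
      (by simpa [hγ0] using hz.2)
  have hmem : ∀ᶠ t in 𝓝 0, γ t ∈ geodesicLine e := by
    filter_upwards [hpos] with t ht
    refine ⟨⟨?_, ht⟩, ?_⟩
    · rw [hγ, lorentzB_comm z, lorentzB_comm w, hγ, hγ, hz.1, hwz, lorentzB_comm z w, hwz, hww]
      linear_combination -cosh_sq_sub_sinh_sq t
    · rw [hγ, hze, hwe]; ring
  have htend : Tendsto γ (𝓝 0) (𝓝[geodesicLine e] z) :=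
    tendsto_nhdsWithin_iff.2 ⟨hγ0 ▸ hcont.tendsto 0, hmem⟩
  have hderiv : HasDerivAt (fun t => lorentzB (γ t) x) (lorentzB w x) 0 := by
    simp_rw [hγ]
    simpa using ((hasDerivAt_cosh 0).mul_const (lorentzB z x)).fun_add
      ((hasDerivAt_sinh 0).mul_const (lorentzB w x))
  have hext' : IsExtrFilter (fun y => lorentzB y x) (𝓝[geodesicLine e] z) (γ 0) := by
    rwa [hγ0]
  exact IsLocalExtr.hasDerivAt_eq_zero (hext'.comp_tendsto htend) hderiv

theorem tangency_value_on_line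
    (x₀ : Fin 3 → ℝ) (e : Fin 3 → ℝ) (he : e ∈ deSitter)
    (zstar : Fin 3 → ℝ) (hz : zstar ∈ hyperboloid) (hze : lorentzB zstar e = 0)
    (hext : IsLocalMaxOn (fun z : Fin 3 → ℝ => lorentzB z x₀)
        {z | z ∈ hyperboloid ∧ lorentzB z e = 0} zstar ∨
      IsLocalMinOn (fun z : Fin 3 → ℝ => lorentzB z x₀)
        {z | z ∈ hyperboloid ∧ lorentzB z e = 0} zstar) :
    (lorentzB zstar x₀) ^ 2 = (lorentzB e x₀) ^ 2 - lorentzB x₀ x₀ := by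
  have hee : lorentzB e e = 1 := he
  have hww : lorentzB (lorentzCross zstar e) (lorentzCross zstar e) = 1 := by
    rw [lorentzB_lorentzCross_self, hze, hz.1, hee]; norm_num
  have hcrit : lorentzB (lorentzCross zstar e) x₀ = 0 :=
    lorentzB_eq_zero_of_isLocalExtrOn hz hze (lorentzB_lorentzCross_left _ _)
      (lorentzB_lorentzCross_right _ _) hww hext.symm
  have hgram := lorentzB_lorentzCross_sq_of_orthonormal hz.1 hee hze x₀
  rw [hcrit] at hgram
  linear_combination -hgram
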